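/- The function f(s) = (2 - 2cos(s) - s·sin(s))/s⁴ is monotonically decreasing on (0, π]. -/

import Mathlib

open Set Real

/-!
Differentiating, `f' s = -h s / s⁵` with `h s = 8 - 8 cos s - 5 s sin s + s² cos s`, so it
suffices that `h > 0` on `(0, π]`. Each of `h`, `q s = 3 sin s - 3 s cos s - s² sin s` and
`p s = sin s - s cos s` vanishes at `0`, and `h' = q`, `q' = s p`, `p' = s sin s`. Since
`s sin s > 0` on `(0, π)`, positivity propagates back from `p` through `q` to `h`.
-/

lemma pos_of_hasDerivAt_pos {g g' : ℝ → ℝ} {a b x : ℝ} (hg : ∀ s, HasDerivAt g (g' s) s)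
    (hga : g a = 0) (hg' : ∀ s ∈ Ioo a b, 0 < g' s) (hx : x ∈ Ioc a b) : 0 < g x := by
  have hmono : StrictMonoOn g (Icc a b) := by
    refine strictMonoOn_of_deriv_pos (convex_Icc a b)
      (fun s _ => (hg s).continuousAt.continuousWithinAt) fun s hs => ?_
    rw [interior_Icc] at hs
    exact (hg s).deriv ▸ hg' s hs
  simpa [hga] using hmono (left_mem_Icc.2 (hx.1.le.trans hx.2)) ⟨hx.1.le, hx.2⟩ hx.1

lemma sin_sub_mul_cos_pos {x : ℝ} (hx : x ∈ Ioc 0 π) : 0 < sin x - x * cos x :=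
  pos_of_hasDerivAt_pos (g := fun s => sin s - s * cos s) (g' := fun s => s * sin s)
    (fun s => ((hasDerivAt_sin s).sub
      ((hasDerivAt_id' (x := s)).mul (hasDerivAt_cos s))).congr_deriv (by ring))
    (by simp) (fun s hs => mul_pos hs.1 (sin_pos_of_pos_of_lt_pi hs.1 hs.2)) hx

lemma three_sin_sub_three_mul_cos_sub_sq_mul_sin_pos {x : ℝ} (hx : x ∈ Ioc 0 π) :
    0 < 3 * sin x - 3 * x * cos x - x ^ 2 * sin x :=
  pos_of_hasDerivAt_pos (g := fun s => 3 * sin s - 3 * s * cos s - s ^ 2 * sin s)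
    (g' := fun s => s * (sin s - s * cos s))
    (fun s => ((((hasDerivAt_sin s).const_mul 3).sub
      (((hasDerivAt_id' (x := s)).const_mul 3).mul (hasDerivAt_cos s))).sub
      ((hasDerivAt_pow 2 s).mul (hasDerivAt_sin s))).congr_deriv
      (by norm_num only [Nat.add_one_sub_one, pow_one]; ring))
    (by simp) (fun s hs => mul_pos hs.1 (sin_sub_mul_cos_pos ⟨hs.1, hs.2.le⟩)) hx

lemma eight_sub_eight_cos_sub_five_mul_sin_add_sq_mul_cos_pos {x : ℝ} (hx : x ∈ Ioc 0 π) :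
    0 < 8 - 8 * cos x - 5 * x * sin x + x ^ 2 * cos x :=
  pos_of_hasDerivAt_pos (g := fun s => 8 - 8 * cos s - 5 * s * sin s + s ^ 2 * cos s)
    (g' := fun s => 3 * sin s - 3 * s * cos s - s ^ 2 * sin s)
    (fun s => ((((hasDerivAt_const s 8).sub ((hasDerivAt_cos s).const_mul 8)).sub
      (((hasDerivAt_id' (x := s)).const_mul 5).mul (hasDerivAt_sin s))).add
      ((hasDerivAt_pow 2 s).mul (hasDerivAt_cos s))).congr_deriv
      (by norm_num only [Nat.add_one_sub_one, pow_one]; ring))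
    (by simp) (fun s hs => three_sin_sub_three_mul_cos_sub_sq_mul_sin_pos ⟨hs.1, hs.2.le⟩) hx

lemma hasDerivAt_M1_profile {x : ℝ} (hx : x ≠ 0) :
    HasDerivAt (fun s : ℝ => (2 - 2 * cos s - s * sin s) / s ^ 4)
      (-(8 - 8 * cos x - 5 * x * sin x + x ^ 2 * cos x) / x ^ 5) x := by
  have hnum : HasDerivAt (fun s : ℝ => 2 - 2 * cos s - s * sin s)
      (2 * sin x - (sin x + x * cos x)) x :=
    (((hasDerivAt_const x 2).sub ((hasDerivAt_cos x).const_mul 2)).sub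
      ((hasDerivAt_id' (x := x)).mul (hasDerivAt_sin x))).congr_deriv (by ring)
  refine (hnum.div (hasDerivAt_pow 4 x) (pow_ne_zero 4 hx)).congr_deriv ?_
  field_simp
  ring

/-- The function `s ↦ (2 - 2cos s - s sin s)/s⁴` is monotonically (strictly)
decreasing on `(0, π]`. -/
theorem M1_profile_strictAntiOn :
    StrictAntiOn (fun s : ℝ => (2 - 2 * Real.cos s - s * Real.sin s) / s ^ 4)
      (Ioc 0 π) := by
  refine strictAntiOn_of_deriv_neg (convex_Ioc 0 π)
    (fun x hx => (hasDerivAt_M1_profile hx.1.ne').continuousAt.continuousWithinAt)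
    fun x hx => ?_
  rw [interior_Ioc] at hx
  rw [(hasDerivAt_M1_profile hx.1.ne').deriv]
  exact div_neg_of_neg_of_pos
    (neg_neg_of_pos (eight_sub_eight_cos_sub_five_mul_sin_add_sq_mul_cos_pos ⟨hx.1, hx.2.le⟩))
    (pow_pos hx.1 5)
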